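/- The coverage measure of a configuration where one nearest-neighbor distance is ε and the remaining n−1 equal 1 tends to sqrt(n−1) as ε → 0⁺; hence the bound λ ≤ sqrt(n−1) is asymptotically sharp at the level of the distance profile. -/

import Mathlib

open Finset Real Filter

/-- Mean of a profile of nearest-neighbor distances. -/
noncomputable def profMean {n : ℕ} (g : Fin n → ℝ) : ℝ := (∑ i, g i) / n

/-- Coverage measure built from a profile of nearest-neighbor distances. -/
noncomputable def profCov {n : ℕ} (g : Fin n → ℝ) : ℝ :=
  Real.sqrt ((∑ i, (g i - profMean g) ^ 2) / n) / profMean g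

/-! For the profile `(a, b, …, b)` every deviation from the mean `(a + (n - 1) b) / n` is a
multiple of `b - a`, which gives the closed form `√(n - 1) |b - a| / (a + (n - 1) b)` of the
coverage measure. At `(ε, 1, …, 1)` this is continuous in `ε` at `0`, with value
`√(n - 1) / (n - 1) = 1 / √(n - 1)`. -/

theorem Fin.sum_ite_val_eq_zero {R : Type*} [Ring R] {n : ℕ} (hn : 0 < n) (a b : R) :
    ∑ i : Fin n, (if (i : ℕ) = 0 then a else b) = a + ((n : R) - 1) * b := by
  obtain ⟨m, rfl⟩ := Nat.exists_eq_add_of_lt hn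
  simp [Fin.sum_univ_succ]

theorem profMean_ite_val_eq_zero {n : ℕ} (hn : 0 < n) (a b : ℝ) :
    profMean (fun i : Fin n => if (i : ℕ) = 0 then a else b) = (a + ((n : ℝ) - 1) * b) / n := by
  rw [profMean, Fin.sum_ite_val_eq_zero hn]

theorem profCov_ite_val_eq_zero {n : ℕ} (hn : 0 < n) (a b : ℝ) :
    profCov (fun i : Fin n => if (i : ℕ) = 0 then a else b) =
      √((n : ℝ) - 1) * |b - a| / (a + ((n : ℝ) - 1) * b) := by
  have hn' : (n : ℝ) ≠ 0 := by positivity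
  have hn1 : (0 : ℝ) ≤ n - 1 := by
    rw [sub_nonneg]; exact_mod_cast hn
  have hvar : (∑ i : Fin n, ((if (i : ℕ) = 0 then a else b) - (a + ((n : ℝ) - 1) * b) / n) ^ 2) / n
      = (√((n : ℝ) - 1) * |b - a| / n) ^ 2 := by
    simp_rw [apply_ite (fun x => (x - (a + ((n : ℝ) - 1) * b) / n) ^ 2)]
    rw [Fin.sum_ite_val_eq_zero hn, div_pow, mul_pow, sq_abs, sq_sqrt hn1]
    field_simp
    ring
  rw [profCov, profMean_ite_val_eq_zero hn, hvar, sqrt_sq (by positivity)]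
  field_simp

/-- for the profile `(ε, 1, …, 1)` of one small and `n − 1`
unit nearest-neighbor distances, `λ(ε) → 1/√(n−1)` as `ε → 0⁺`. -/
theorem coverage_profile_limit {n : ℕ} (hn : 2 ≤ n) :
    Tendsto (fun ε : ℝ =>
        profCov (fun i : Fin n => if (i : ℕ) = 0 then ε else 1))
      (nhdsWithin 0 (Set.Ioi 0))
      (nhds (1 / Real.sqrt ((n : ℝ) - 1))) := by
  have hn1 : (0 : ℝ) < n - 1 := by
    rw [sub_pos]; exact_mod_cast hn
  simp_rw [profCov_ite_val_eq_zero (by omega : 0 < n), mul_one]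
  have hcont : ContinuousAt (fun ε : ℝ => √((n : ℝ) - 1) * |1 - ε| / (ε + ((n : ℝ) - 1))) 0 :=
    ContinuousAt.div (by fun_prop) (by fun_prop) (by simp [hn1.ne'])
  have hval : √((n : ℝ) - 1) * |1 - 0| / (0 + ((n : ℝ) - 1)) = 1 / √((n : ℝ) - 1) := by
    rw [sub_zero, abs_one, mul_one, zero_add, div_eq_div_iff hn1.ne' (sqrt_pos.2 hn1).ne',
      one_mul, mul_self_sqrt hn1.le]
  exact hval ▸ hcont.tendsto.mono_left nhdsWithin_le_nhds
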